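/- arXiv:1911.07428 — 4 statements merged into one kernel-verified Lean document; each statement's English description precedes it below -/
import Mathlib

section
/- Let S be the n×n real skew-symmetric matrix with zero diagonal, all entries above the diagonal equal to 1 and all entries below the diagonal equal to -1. Then the spectral radius of S equals cot(π/(2n)). -/
/-! Subtracting consecutive rows of `S v = μ v` gives `(μ - 1) vᵢ = (μ + 1) vᵢ₊₁`, so an
eigenvector is geometric with ratio `r = (μ - 1) / (μ + 1)`, and its first row then forces
`r ^ n = -1`. Conversely every such `r` gives the eigenvector `(rⁱ)ᵢ`. So the eigenvalues are
`(1 + r) / (1 - r) = i cot ((2k + 1)π / (2n))`, `k < n`, and `k = 0` has the largest modulus. -/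

open Complex Matrix Real

theorem Matrix.mem_spectrum_iff_exists_mulVec_eq_smul {K ι : Type*} [Field K] [Fintype ι]
    [DecidableEq ι] {A : Matrix ι ι K} {μ : K} :
    μ ∈ spectrum K A ↔ ∃ v ≠ 0, A *ᵥ v = μ • v := by
  rw [← Matrix.spectrum_toLin', ← Module.End.hasEigenvalue_iff_mem_spectrum,
    Module.End.hasEigenvalue_iff, Submodule.ne_bot_iff]
  simp [and_comm]

theorem Complex.pow_eq_neg_one_iff_exists_eq_exp {n : ℕ} (hn : n ≠ 0) {r : ℂ} :
    r ^ n = -1 ↔ ∃ k < n, r = exp (2 * I * ((2 * k + 1) * π / (2 * n))) := by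
  have h2n : 2 * n ≠ 0 := by omega
  have : NeZero (2 * n) := ⟨h2n⟩
  set ζ := exp (2 * π * I / (2 * n : ℕ))
  have hζ : IsPrimitiveRoot ζ (2 * n) := isPrimitiveRoot_exp _ h2n
  have hpow (j : ℕ) : ζ ^ j = exp (2 * I * (j * π / (2 * n))) := by
    rw [← exp_nat_mul]
    congr 1
    push_cast
    ring
  have hζn : ζ ^ n = -1 := by
    rw [hpow, ← exp_pi_mul_I]
    congr 1
    field_simp
  constructor
  · intro hr
    obtain ⟨j, hj, rfl⟩ := hζ.eq_pow_of_pow_eq_one (by rw [pow_mul', hr, neg_one_sq])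
    rw [← pow_mul, mul_comm, pow_mul, hζn, neg_one_pow_eq_neg_one_iff_odd (by norm_num)] at hr
    obtain ⟨k, rfl⟩ := hr
    exact ⟨k, by omega, by rw [hpow]; push_cast; ring_nf⟩
  · rintro ⟨k, -, rfl⟩
    have := hpow (2 * k + 1)
    push_cast at this
    rw [← this, ← pow_mul, mul_comm, pow_mul, hζn, Odd.neg_one_pow (odd_two_mul_add_one k)]

theorem Complex.one_add_exp_div_one_sub_exp (z : ℂ) :
    (1 + exp (2 * I * z)) / (1 - exp (2 * I * z)) = I * cot z := by
  rw [cot_eq_exp_ratio, mul_div_assoc', mul_div_mul_left _ _ I_ne_zero, add_comm]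

theorem Real.abs_cot_le_cot {a θ : ℝ} (ha : 0 < a) (haθ : a ≤ θ) (hθa : θ ≤ π - a) :
    |cot θ| ≤ cot a := by
  have hsa : 0 < sin a := sin_pos_of_pos_of_lt_pi ha (by linarith)
  have hsθ : 0 < sin θ := sin_pos_of_pos_of_lt_pi (by linarith) (by linarith)
  have hsub : 0 ≤ sin (θ - a) := sin_nonneg_of_nonneg_of_le_pi (by linarith) (by linarith)
  have hadd : 0 ≤ sin (θ + a) := sin_nonneg_of_nonneg_of_le_pi (by linarith) (by linarith)
  rw [sin_sub] at hsub
  rw [sin_add] at hadd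
  rw [cot_eq_cos_div_sin, cot_eq_cos_div_sin, abs_div, abs_of_pos hsθ, div_le_div_iff₀ hsθ hsa,
    ← abs_of_pos hsa, ← abs_mul]
  exact abs_le.2 ⟨by linarith, by linarith⟩

namespace TransitiveTournament

def skewAdj (R : Type*) [Ring R] (n : ℕ) : Matrix (Fin n) (Fin n) R :=
  of fun i j => if i < j then 1 else if j < i then -1 else 0

section Ring

variable {R : Type*} [Ring R] {m : ℕ}

lemma skewAdj_zero_apply (k : Fin (m + 1)) :
    skewAdj R (m + 1) 0 k = 1 - if k = 0 then 1 else 0 := by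
  rcases eq_or_ne k 0 with rfl | hk
  · simp [skewAdj]
  · simp [skewAdj, hk, Fin.pos_iff_ne_zero.2 hk]

lemma skewAdj_castSucc_apply_sub_succ_apply (i : Fin m) (k : Fin (m + 1)) :
    skewAdj R (m + 1) i.castSucc k - skewAdj R (m + 1) i.succ k =
      (if k = i.castSucc then 1 else 0) + if k = i.succ then 1 else 0 := by
  simp only [skewAdj, of_apply, Fin.lt_def, Fin.ext_iff, Fin.val_castSucc,
    Fin.val_succ]
  split_ifs <;> first | omega | norm_num

lemma skewAdj_mulVec_zero (v : Fin (m + 1) → R) :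
    (skewAdj R (m + 1) *ᵥ v) 0 = ∑ j, v j - v 0 := by
  simp [mulVec, dotProduct, skewAdj_zero_apply, sub_mul, Finset.sum_sub_distrib]

lemma skewAdj_mulVec_castSucc_sub_succ (v : Fin (m + 1) → R) (i : Fin m) :
    (skewAdj R (m + 1) *ᵥ v) i.castSucc - (skewAdj R (m + 1) *ᵥ v) i.succ =
      v i.castSucc + v i.succ := by
  simp [mulVec, dotProduct, ← Finset.sum_sub_distrib, ← sub_mul,
    skewAdj_castSucc_apply_sub_succ_apply, add_mul, Finset.sum_add_distrib]

end Ring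

section CommRing

variable {R : Type*} [CommRing R] {m : ℕ}

theorem skewAdj_mulVec_eq_smul_iff {v : Fin (m + 1) → R} {μ : R} :
    skewAdj R (m + 1) *ᵥ v = μ • v ↔
      μ * v 0 = ∑ j, v j - v 0 ∧ ∀ i : Fin m, (μ - 1) * v i.castSucc = (μ + 1) * v i.succ := by
  constructor
  · intro h
    refine ⟨by simpa [h] using skewAdj_mulVec_zero v, fun i => ?_⟩
    have := skewAdj_mulVec_castSucc_sub_succ v i
    simp only [h, Pi.smul_apply, smul_eq_mul] at this
    linear_combination this
  · rintro ⟨h0, hsucc⟩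
    ext k
    induction k using Fin.induction with
    | zero => simpa [skewAdj_mulVec_zero] using h0.symm
    | succ i ih =>
      have := skewAdj_mulVec_castSucc_sub_succ v i
      simp only [Pi.smul_apply, smul_eq_mul] at ih ⊢
      linear_combination ih - this + hsucc i

end CommRing

section Field

variable {K : Type*} [Field K] {m : ℕ}

theorem skewAdj_mulVec_geom {r : K} (hr1 : r ≠ 1) (hr : r ^ (m + 1) = -1) :
    skewAdj K (m + 1) *ᵥ (fun i : Fin (m + 1) => r ^ (i : ℕ)) =
      ((1 + r) / (1 - r)) • fun i : Fin (m + 1) => r ^ (i : ℕ) := by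
  have hr1' : 1 - r ≠ 0 := sub_ne_zero.2 hr1.symm
  have hsum : (∑ i ∈ Finset.range (m + 1), r ^ i) * (1 - r) = 2 := by
    linear_combination -(geom_sum_mul r (m + 1)) - hr
  refine skewAdj_mulVec_eq_smul_iff.2 ⟨?_, fun i => ?_⟩
  · rw [Fin.sum_univ_eq_sum_range (r ^ ·), Fin.val_zero, pow_zero, mul_one, div_eq_iff hr1']
    linear_combination -hsum
  · field_simp
    simp only [Fin.val_castSucc, Fin.val_succ, pow_succ]
    ring

variable [NeZero (2 : K)]

theorem add_one_ne_zero_of_skewAdj_mulVec_eq_smul {v : Fin (m + 1) → K} {μ : K} (hv : v ≠ 0)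
    (h : skewAdj K (m + 1) *ᵥ v = μ • v) : μ + 1 ≠ 0 := by
  rintro hμ
  obtain ⟨h0, hsucc⟩ := skewAdj_mulVec_eq_smul_iff.1 h
  have hμ1 : μ - 1 ≠ 0 := by
    rw [show μ - 1 = -2 by linear_combination hμ]
    exact neg_ne_zero.2 two_ne_zero
  have hcast : ∀ i : Fin m, v i.castSucc = 0 := fun i => by
    simpa [hμ, hμ1] using hsucc i
  have hlast : v (Fin.last m) = 0 := by
    rw [Fin.sum_univ_castSucc] at h0
    simp only [hcast, Finset.sum_const_zero, zero_add] at h0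
    linear_combination -h0 + v 0 * hμ
  refine hv (funext fun i => ?_)
  induction i using Fin.lastCases with
  | last => exact hlast
  | cast i => exact hcast i

theorem pow_eq_neg_one_of_skewAdj_mulVec_eq_smul {v : Fin (m + 1) → K} {μ : K} (hv : v ≠ 0)
    (h : skewAdj K (m + 1) *ᵥ v = μ • v) : ((μ - 1) / (μ + 1)) ^ (m + 1) = -1 := by
  have hμ := add_one_ne_zero_of_skewAdj_mulVec_eq_smul hv h
  obtain ⟨h0, hsucc⟩ := skewAdj_mulVec_eq_smul_iff.1 h
  set r := (μ - 1) / (μ + 1)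
  have hr : r * (μ + 1) = μ - 1 := div_mul_cancel₀ _ hμ
  have hgeom : ∀ i : Fin (m + 1), v i = r ^ (i : ℕ) * v 0 := by
    intro i
    induction i using Fin.induction with
    | zero => simp
    | succ i ih =>
      rw [Fin.val_succ, pow_succ, mul_right_comm, ← Fin.val_castSucc, ← ih, ← mul_left_inj' hμ]
      linear_combination -(hsucc i) - v i.castSucc * hr
  have hv0 : v 0 ≠ 0 := fun h0 => hv (funext fun i => by simp [hgeom i, h0])
  have hsum : ∑ i ∈ Finset.range (m + 1), r ^ i = μ + 1 := by
    refine mul_right_cancel₀ hv0 ?_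
    rw [Finset.sum_mul, ← Fin.sum_univ_eq_sum_range (fun i => r ^ i * v 0)]
    simp only [← hgeom]
    linear_combination -h0
  linear_combination -(geom_sum_mul r (m + 1)) + (r - 1) * hsum + hr

theorem mem_spectrum_skewAdj_iff {μ : K} :
    μ ∈ spectrum K (skewAdj K (m + 1)) ↔ ∃ r : K, r ^ (m + 1) = -1 ∧ μ = (1 + r) / (1 - r) := by
  rw [Matrix.mem_spectrum_iff_exists_mulVec_eq_smul]
  constructor
  · rintro ⟨v, hv, h⟩
    refine ⟨_, pow_eq_neg_one_of_skewAdj_mulVec_eq_smul hv h, ?_⟩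
    have hμ := add_one_ne_zero_of_skewAdj_mulVec_eq_smul hv h
    rw [one_add_div hμ, one_sub_div hμ, div_div_div_cancel_right₀ hμ,
      show μ + 1 - (μ - 1) = 2 by ring, eq_div_iff two_ne_zero]
    ring
  · rintro ⟨r, hr, rfl⟩
    have hr1 : r ≠ 1 := by
      rintro rfl
      rw [one_pow, eq_neg_iff_add_eq_zero, one_add_one_eq_two] at hr
      exact two_ne_zero hr
    exact ⟨_, fun h => by simpa using congrFun h 0, skewAdj_mulVec_geom hr1 hr⟩

end Field

variable {m : ℕ}

theorem mem_spectrum_skewAdj_complex_iff {μ : ℂ} :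
    μ ∈ spectrum ℂ (skewAdj ℂ (m + 1)) ↔
      ∃ k < m + 1, μ = I * (Real.cot ((2 * k + 1) * π / (2 * (m + 1))) : ℝ) := by
  simp only [mem_spectrum_skewAdj_iff, pow_eq_neg_one_iff_exists_eq_exp m.succ_ne_zero]
  constructor
  · rintro ⟨_, ⟨k, hk, rfl⟩, rfl⟩
    refine ⟨k, hk, ?_⟩
    rw [one_add_exp_div_one_sub_exp, ofReal_cot]
    push_cast
    rfl
  · rintro ⟨k, hk, rfl⟩
    refine ⟨_, ⟨k, hk, rfl⟩, ?_⟩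
    rw [one_add_exp_div_one_sub_exp, ofReal_cot]
    push_cast
    rfl

theorem abs_cot_odd_mul_pi_div_le {k : ℕ} (hk : k < m + 1) :
    |Real.cot ((2 * k + 1) * π / (2 * (m + 1)))| ≤ Real.cot (π / (2 * (m + 1))) := by
  have hk' : (k : ℝ) + 1 ≤ m + 1 := by exact_mod_cast hk
  apply Real.abs_cot_le_cot (by positivity)
  · gcongr
    nlinarith [k.cast_nonneg (α := ℝ), pi_pos]
  · rw [div_le_iff₀ (by positivity), sub_mul, div_mul_cancel₀ _ (by positivity)]
    nlinarith [pi_pos]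

theorem isGreatest_norm_spectrum_skewAdj :
    IsGreatest ((‖·‖) '' spectrum ℂ (skewAdj ℂ (m + 1))) (Real.cot (π / (2 * (m + 1)))) := by
  have hnorm (x : ℝ) : ‖I * x‖ = |x| := by simp
  refine ⟨⟨_, mem_spectrum_skewAdj_complex_iff.2 ⟨0, m.succ_pos, rfl⟩, ?_⟩, ?_⟩
  · have hle := abs_cot_odd_mul_pi_div_le m.succ_pos
    simp only [CharP.cast_eq_zero, mul_zero, zero_add, one_mul] at hle ⊢
    rw [hnorm, abs_of_nonneg ((abs_nonneg _).trans hle)]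
  · rintro _ ⟨μ, hμ, rfl⟩
    obtain ⟨k, hk, rfl⟩ := mem_spectrum_skewAdj_complex_iff.1 hμ
    exact (hnorm _).trans_le (abs_cot_odd_mul_pi_div_le hk)

end TransitiveTournament

theorem stmt_5 (n : ℕ) (hn : 0 < n)
    (S : Matrix (Fin n) (Fin n) ℂ)
    (hS : S = Matrix.of fun i j : Fin n =>
      if i < j then 1 else if j < i then -1 else 0) :
    sSup ((fun μ => ‖μ‖) '' spectrum ℂ S) =
      Real.cot (π / (2 * n)) := by
  obtain ⟨m, rfl⟩ := Nat.exists_eq_add_one_of_ne_zero hn.ne'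
  rw [show S = TransitiveTournament.skewAdj ℂ (m + 1) from hS]
  push_cast
  exact TransitiveTournament.isGreatest_norm_spectrum_skewAdj.csSup_eq
end

section
/- Let G^σ be any oriented simple graph on n vertices with skew-adjacency matrix S(G^σ) (entries s_{ij} = 1 if i→j is an arc, s_{ji} = -1, and 0 if no edge). Then the spectral radius of S(G^σ) is at most cot(π/(2n)). -/
/-!
For an eigenpair `S v = μ v`, the number `μ ‖v‖² = v* S v` is purely imaginary, so its modulus is
at most `∑_{j,k} |Im (v̄_j v_k)|`. Replacing each `v_j` by `± v_j` in the closed upper half-plane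
and sorting by argument makes `Im (v̄_j v_k) ≥ 0` whenever `j ≤ k`; the sum is then `Im (v* T v)`
for the transitive tournament `T`. Finally `T` is diagonalised by the orthogonal vectors
`(r, r², …, rⁿ)`, `rⁿ = -1`, with eigenvalues `(r + 1) / (1 - r) = i cot ((2m+1)π/(2n))`, all of
modulus at most `cot (π/(2n))`, which bounds `|v* T v| / ‖v‖²`.
-/

open Complex Matrix Finset
open scoped Real ComplexConjugate

section QuadraticForms

variable {ι κ : Type*} [Fintype ι] [Fintype κ]

lemma star_dotProduct_self_eq (u : ι → ℂ) : star u ⬝ᵥ u = ((∑ j, ‖u j‖ ^ 2 : ℝ) : ℂ) := by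
  simp [dotProduct, conj_mul']

lemma star_dotProduct_map_ofReal_mulVec (A : Matrix ι ι ℝ) (u : ι → ℂ) :
    star u ⬝ᵥ (A.map ofReal *ᵥ u) = ∑ j, ∑ k, (A j k : ℂ) * (conj (u j) * u k) := by
  simp only [dotProduct, mulVec, map_apply, mul_sum, Pi.star_apply, RCLike.star_def]
  exact sum_congr rfl fun j _ => sum_congr rfl fun k _ => by ring

lemma norm_star_dotProduct_mulVec_le_sum_abs_im {A : Matrix ι ι ℝ} (hA : Aᵀ = -A)
    (hA1 : ∀ j k, |A j k| ≤ 1) (v : ι → ℂ) :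
    ‖star v ⬝ᵥ (A.map ofReal *ᵥ v)‖ ≤ ∑ j, ∑ k, |(conj (v j) * v k).im| := by
  set Q := star v ⬝ᵥ (A.map ofReal *ᵥ v)
  have hQ : Q = ∑ j, ∑ k, (A j k : ℂ) * (conj (v j) * v k) :=
    star_dotProduct_map_ofReal_mulVec A v
  have hskew : ∀ j k, A k j = -A j k := fun j k => by
    simpa using congrFun (congrFun hA j) k
  have hre : Q.re = 0 := by
    have hsum : Q.re = ∑ j, ∑ k, A j k * (conj (v j) * v k).re := by
      simp only [hQ, re_sum, re_ofReal_mul]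
    have hanti : Q.re = -Q.re := calc
      Q.re = ∑ k, ∑ j, A j k * (conj (v j) * v k).re := hsum.trans sum_comm
      _ = -Q.re := by
        simp only [hsum, ← sum_neg_distrib]
        refine sum_congr rfl fun k _ => sum_congr rfl fun j _ => ?_
        simp only [hskew j k, mul_re, conj_re, conj_im]
        ring
    linarith
  rw [← abs_im_eq_norm.mpr hre, hQ]
  simp only [im_sum, im_ofReal_mul]
  refine (abs_sum_le_sum_abs _ _).trans (sum_le_sum fun j _ => ?_)
  refine (abs_sum_le_sum_abs _ _).trans (sum_le_sum fun k _ => ?_)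
  rw [abs_mul]
  exact mul_le_of_le_one_left (abs_nonneg _) (hA1 j k)

variable [DecidableEq ι] [DecidableEq κ]

lemma star_dotProduct_mulVec_eq_of_mul_eq_diagonal {A : Matrix ι ι ℂ} {U : Matrix ι κ ℂ}
    {d : κ → ℂ} {N : ℂ} (hU : U * Uᴴ = N • 1) (hAU : A * U = U * diagonal d) (u : ι → ℂ) :
    N * (star u ⬝ᵥ (A *ᵥ u)) = star (Uᴴ *ᵥ u) ⬝ᵥ (diagonal d *ᵥ (Uᴴ *ᵥ u)) := by
  have hA : N • A = U * diagonal d * Uᴴ := by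
    rw [← hAU, Matrix.mul_assoc, hU, Matrix.mul_smul, Matrix.mul_one]
  rw [← smul_eq_mul, ← dotProduct_smul, ← smul_mulVec, hA, star_mulVec, conjTranspose_conjTranspose,
    ← dotProduct_mulVec, mulVec_mulVec, mulVec_mulVec]

lemma norm_star_dotProduct_mulVec_le_of_mul_eq_diagonal {A : Matrix ι ι ℂ} {U : Matrix ι κ ℂ}
    {d : κ → ℂ} {N c : ℝ} (hN : 0 < N) (hU : U * Uᴴ = (N : ℂ) • 1)
    (hAU : A * U = U * diagonal d) (hd : ∀ m, ‖d m‖ ≤ c) (u : ι → ℂ) :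
    ‖star u ⬝ᵥ (A *ᵥ u)‖ ≤ c * ∑ j, ‖u j‖ ^ 2 := by
  set w := Uᴴ *ᵥ u
  have hnorm : N * ∑ j, ‖u j‖ ^ 2 = ∑ m, ‖w m‖ ^ 2 := by
    have := star_dotProduct_mulVec_eq_of_mul_eq_diagonal hU (A := 1) (d := fun _ => 1)
      (by rw [Matrix.one_mul, diagonal_one, Matrix.mul_one]) u
    rw [diagonal_one, one_mulVec, one_mulVec, star_dotProduct_self_eq, star_dotProduct_self_eq]
      at this
    exact_mod_cast this
  have hdiag : ‖star w ⬝ᵥ (diagonal d *ᵥ w)‖ ≤ c * ∑ m, ‖w m‖ ^ 2 := by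
    simp only [dotProduct, mulVec_diagonal, mul_sum]
    refine (norm_sum_le _ _).trans (sum_le_sum fun m _ => ?_)
    rw [Pi.star_apply, norm_mul, norm_mul, norm_star]
    nlinarith [hd m, norm_nonneg (w m)]
  have := star_dotProduct_mulVec_eq_of_mul_eq_diagonal hU hAU u
  rw [← mul_le_mul_iff_of_pos_left hN]
  calc N * ‖star u ⬝ᵥ (A *ᵥ u)‖ = ‖star w ⬝ᵥ (diagonal d *ᵥ w)‖ := by
        rw [← this, norm_mul, Complex.norm_real, Real.norm_of_nonneg hN.le]
    _ ≤ c * ∑ m, ‖w m‖ ^ 2 := hdiag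
    _ = N * (c * ∑ j, ‖u j‖ ^ 2) := by rw [← hnorm]; ring

end QuadraticForms

lemma abs_cot_le_cot {a x : ℝ} (ha : 0 < a) (hax : a ≤ x) (hxa : x ≤ π - a) :
    |Real.cot x| ≤ Real.cot a := by
  have hsin_a : 0 < Real.sin a := Real.sin_pos_of_pos_of_lt_pi ha (by linarith)
  have hsin : Real.sin a ≤ Real.sin x := by
    rcases le_total x (π / 2) with hx | hx
    · exact Real.sin_le_sin_of_le_of_le_pi_div_two (by linarith) hx hax
    · rw [← Real.sin_pi_sub x]
      exact Real.sin_le_sin_of_le_of_le_pi_div_two (by linarith) (by linarith) (by linarith)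
  have hcos : |Real.cos x| ≤ Real.cos a := by
    refine abs_le.mpr ⟨?_, Real.cos_le_cos_of_nonneg_of_le_pi ha.le (by linarith) hax⟩
    rw [← Real.cos_pi_sub a]
    exact Real.cos_le_cos_of_nonneg_of_le_pi (by linarith) (by linarith) hxa
  rw [Real.cot_eq_cos_div_sin, Real.cot_eq_cos_div_sin, abs_div,
    abs_of_pos (hsin_a.trans_le hsin)]
  exact div_le_div₀ ((abs_nonneg _).trans hcos) hcos hsin_a hsin

/-- For `m < n` these are the `n` roots of `z ^ n = -1`. -/
noncomputable def negOneRoot (n m : ℕ) : ℂ := exp (π * I / n) ^ (2 * m + 1)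

lemma negOneRoot_pow_self {n : ℕ} (hn : n ≠ 0) (m : ℕ) : negOneRoot n m ^ n = -1 := by
  have : exp (π * I / n) ^ n = -1 := by
    rw [← exp_nat_mul, mul_div_cancel₀ _ (Nat.cast_ne_zero.mpr hn), exp_pi_mul_I]
  rw [negOneRoot, pow_right_comm, this, Odd.neg_one_pow (odd_two_mul_add_one m)]

lemma norm_negOneRoot (n m : ℕ) : ‖negOneRoot n m‖ = 1 := by
  rw [negOneRoot, norm_pow, norm_exp]
  simp

lemma negOneRoot_eq_exp (n m : ℕ) :
    negOneRoot n m = exp (2 * I * ((2 * m + 1) * π / (2 * n) : ℝ)) := by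
  rw [negOneRoot, ← exp_nat_mul]
  push_cast
  ring_nf

lemma sum_negOneRoot_pow_eq_zero {n d : ℕ} (hd : 0 < d) (hdn : d < n) :
    ∑ m : Fin n, negOneRoot n m ^ d = 0 := by
  set q := exp (2 * π * I / n) ^ d
  have hω := isPrimitiveRoot_exp n (by omega)
  have hq : q ≠ 1 := hω.pow_ne_one_of_pos_of_lt hd.ne' hdn
  have hqn : q ^ n = 1 := by rw [pow_right_comm, hω.pow_eq_one, one_pow]
  have hterm : ∀ m : ℕ, negOneRoot n m ^ d = exp (π * I / n) ^ d * q ^ m := by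
    intro m
    rw [negOneRoot, ← pow_mul, ← pow_mul, ← exp_nat_mul, ← exp_nat_mul,
      ← exp_nat_mul, ← exp_add]
    congr 1
    push_cast
    ring
  rw [Fin.sum_univ_eq_sum_range (fun m => negOneRoot n m ^ d), sum_congr rfl fun m _ => hterm m,
    ← mul_sum, geom_sum_eq hq, hqn, sub_self, zero_div, mul_zero]

noncomputable def transitiveTournament (n : ℕ) : Matrix (Fin n) (Fin n) ℝ :=
  of fun j k => if j < k then 1 else if k < j then -1 else 0

lemma sum_transitiveTournament_mul_pow {n : ℕ} {r : ℂ} (hr : r ≠ 1) (hrn : r ^ n = -1)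
    (j : Fin n) :
    ∑ k, (transitiveTournament n j k : ℂ) * r ^ ((k : ℕ) + 1)
      = (r + 1) / (1 - r) * r ^ ((j : ℕ) + 1) := by
  set f : ℕ → ℂ := fun t => (if (j : ℕ) < t then 1 else if t < j then -1 else 0) * r ^ (t + 1)
  have geom : ∀ a, ∑ t ∈ range a, r ^ (t + 1) = (r ^ a - 1) / (r - 1) * r := by
    intro a
    simp only [pow_succ, ← sum_mul, geom_sum_eq hr]
  have lower : ∑ t ∈ range j, f t = -∑ t ∈ range j, r ^ (t + 1) := by
    rw [← sum_neg_distrib]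
    refine sum_congr rfl fun t ht => ?_
    have := mem_range.mp ht
    simp [f, this, this.not_gt]
  have upper : ∑ t ∈ Ico ((j : ℕ) + 1) n, f t = ∑ t ∈ Ico ((j : ℕ) + 1) n, r ^ (t + 1) := by
    refine sum_congr rfl fun t ht => ?_
    have : (j : ℕ) < t := (mem_Ico.mp ht).1
    simp [f, this]
  have hj : (j : ℕ) + 1 ≤ n := j.isLt
  calc ∑ k, (transitiveTournament n j k : ℂ) * r ^ ((k : ℕ) + 1) = ∑ t ∈ range n, f t := by
        rw [← Fin.sum_univ_eq_sum_range]
        refine sum_congr rfl fun k _ => ?_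
        simp only [f, transitiveTournament, of_apply, Fin.lt_def]
        split_ifs <;> simp
    _ = ∑ t ∈ range j, f t + f j + ∑ t ∈ Ico ((j : ℕ) + 1) n, f t := by
        rw [← sum_range_succ, sum_range_add_sum_Ico _ hj]
    _ = (r + 1) / (1 - r) * r ^ ((j : ℕ) + 1) := by
        rw [lower, upper, sum_Ico_eq_sub _ hj, geom, geom, geom, hrn]
        simp only [f, lt_irrefl, if_false, zero_mul]
        field_simp
        ring

lemma pow_mul_conj_pow_of_le {r : ℂ} (hr : ‖r‖ = 1) {a b : ℕ} (h : b ≤ a) :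
    r ^ a * conj (r ^ b) = r ^ (a - b) := by
  obtain ⟨c, rfl⟩ := Nat.exists_eq_add_of_le h
  rw [pow_add, mul_comm (r ^ b), mul_assoc, mul_conj', norm_pow, hr]
  simp

lemma sum_negOneRoot_pow_mul_conj_pow_eq_zero {n a b : ℕ} (hba : b < a) (han : a - b < n) :
    ∑ m : Fin n, negOneRoot n m ^ a * conj (negOneRoot n m ^ b) = 0 := by
  simp only [pow_mul_conj_pow_of_le (norm_negOneRoot _ _) hba.le]
  exact sum_negOneRoot_pow_eq_zero (by omega) han

noncomputable def tournamentEigenvectors (n : ℕ) : Matrix (Fin n) (Fin n) ℂ :=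
  of fun j m => negOneRoot n m ^ ((j : ℕ) + 1)

lemma tournamentEigenvectors_mul_conjTranspose (n : ℕ) :
    tournamentEigenvectors n * (tournamentEigenvectors n)ᴴ = (n : ℂ) • 1 := by
  ext j k
  simp only [mul_apply, conjTranspose_apply, tournamentEigenvectors, of_apply, Matrix.smul_apply,
    one_apply, RCLike.star_def, smul_eq_mul, mul_ite, mul_one, mul_zero]
  have hj := j.isLt
  have hk := k.isLt
  rcases lt_trichotomy j k with h | rfl | h
  · rw [if_neg h.ne, ← conj_conj (∑ m : Fin n, _), map_sum]
    simp only [map_mul, conj_conj, mul_comm (negOneRoot n _ ^ ((j : ℕ) + 1))]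
    rw [sum_negOneRoot_pow_mul_conj_pow_eq_zero (by simpa using h) (by omega), map_zero]
  · simp only [if_true, mul_conj', norm_pow, norm_negOneRoot, one_pow]
    simp
  · rw [if_neg h.ne', sum_negOneRoot_pow_mul_conj_pow_eq_zero (by simpa using h) (by omega)]

lemma transitiveTournament_mul_tournamentEigenvectors {n : ℕ} (hn : n ≠ 0) :
    (transitiveTournament n).map ofReal * tournamentEigenvectors n
      = tournamentEigenvectors n
        * diagonal fun m : Fin n => (negOneRoot n m + 1) / (1 - negOneRoot n m) := by
  ext j m
  have hr := negOneRoot_pow_self hn m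
  rw [mul_diagonal]
  simp only [mul_apply, map_apply, tournamentEigenvectors, of_apply]
  rw [sum_transitiveTournament_mul_pow (fun h => by norm_num [h] at hr) hr, mul_comm]

lemma norm_negOneRoot_add_one_div_one_sub_le {n m : ℕ} (hm : m < n) :
    ‖(negOneRoot n m + 1) / (1 - negOneRoot n m)‖ ≤ Real.cot (π / (2 * n)) := by
  set x : ℝ := (2 * m + 1) * π / (2 * n)
  have hratio : (negOneRoot n m + 1) / (1 - negOneRoot n m) = I * Real.cot x := by
    rw [ofReal_cot, cot_eq_exp_ratio, negOneRoot_eq_exp, mul_div_assoc',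
      mul_div_mul_left _ _ I_ne_zero]
  have hn : (0 : ℝ) < n := by exact_mod_cast (m.zero_le.trans_lt hm)
  have hmn : (m : ℝ) + 1 ≤ n := by exact_mod_cast hm
  rw [hratio, norm_mul, norm_I, one_mul, norm_real, Real.norm_eq_abs]
  refine abs_cot_le_cot (by positivity) ?_ ?_
  · simp only [x]
    gcongr
    nlinarith [Real.pi_pos, m.cast_nonneg (α := ℝ)]
  · simp only [x]
    rw [div_le_iff₀ (by positivity)]
    field_simp
    nlinarith [Real.pi_pos]

lemma norm_star_dotProduct_transitiveTournament_mulVec_le {n : ℕ} (hn : n ≠ 0)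
    (u : Fin n → ℂ) :
    ‖star u ⬝ᵥ ((transitiveTournament n).map ofReal *ᵥ u)‖
      ≤ Real.cot (π / (2 * n)) * ∑ j, ‖u j‖ ^ 2 := by
  refine norm_star_dotProduct_mulVec_le_of_mul_eq_diagonal (N := n) (by positivity)
    (by exact_mod_cast tournamentEigenvectors_mul_conjTranspose n)
    (transitiveTournament_mul_tournamentEigenvectors hn)
    (fun m => norm_negOneRoot_add_one_div_one_sub_le m.isLt) u

lemma im_conj_mul_nonneg_of_arg_le {z w : ℂ} (hz : 0 ≤ arg z) (hzw : arg z ≤ arg w) :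
    0 ≤ (conj z * w).im := by
  rcases eq_or_ne z 0 with rfl | hz0
  · simp
  rcases eq_or_ne w 0 with rfl | hw0
  · simp
  have hsin : 0 ≤ Real.sin (arg w - arg z) :=
    Real.sin_nonneg_of_nonneg_of_le_pi (by linarith) (by linarith [arg_le_pi w])
  have : (conj z * w).im = ‖z‖ * ‖w‖ * Real.sin (arg w - arg z) := by
    rw [Real.sin_sub, sin_arg, sin_arg, cos_arg hz0, cos_arg hw0]
    field_simp
    simp [mul_im]
    ring
  rw [this]
  positivity

lemma exists_abs_eq_one_im_mul_nonneg (z : ℂ) : ∃ s : ℝ, |s| = 1 ∧ 0 ≤ (s * z).im := by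
  rcases le_or_gt 0 z.im with h | h
  · exact ⟨1, by simp, by simpa using h⟩
  · exact ⟨-1, by simp, by simpa using h.le⟩


lemma sum_abs_im_conj_mul_eq_im {n : ℕ} {u : Fin n → ℂ}
    (hu : ∀ j k, j ≤ k → 0 ≤ (conj (u j) * u k).im) :
    ∑ j, ∑ k, |(conj (u j) * u k).im|
      = (star u ⬝ᵥ ((transitiveTournament n).map ofReal *ᵥ u)).im := by
  rw [star_dotProduct_map_ofReal_mulVec]
  simp only [im_sum, im_ofReal_mul]
  refine sum_congr rfl fun j _ => sum_congr rfl fun k _ => ?_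
  have hswap : (conj (u k) * u j).im = -(conj (u j) * u k).im := by
    rw [← conj_im, map_mul, conj_conj, mul_comm]
  rcases lt_trichotomy j k with h | rfl | h
  · rw [abs_of_nonneg (hu j k h.le)]
    simp [transitiveTournament, h]
  · rw [conj_mul', ← ofReal_pow, ofReal_im, abs_zero]
    simp [transitiveTournament]
  · rw [abs_of_nonpos (by linarith [hu k j h.le])]
    simp [transitiveTournament, h, h.not_gt]

lemma sum_abs_im_conj_mul_le {n : ℕ} (hn : n ≠ 0) (v : Fin n → ℂ) :
    ∑ j, ∑ k, |(conj (v j) * v k).im| ≤ Real.cot (π / (2 * n)) * ∑ j, ‖v j‖ ^ 2 := by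
  choose s hs_abs hs_im using fun j => exists_abs_eq_one_im_mul_nonneg (v j)
  set w : Fin n → ℂ := fun j => s j * v j
  set σ := Tuple.sort fun j => arg (w j)
  set u := w ∘ σ
  have hsorted : ∀ j k, j ≤ k → 0 ≤ (conj (u j) * u k).im := fun j k hjk =>
    im_conj_mul_nonneg_of_arg_le (arg_nonneg_iff.mpr (hs_im _))
      (Tuple.monotone_sort (fun j => arg (w j)) hjk)
  have habs : ∀ j k, |(conj (w j) * w k).im| = |(conj (v j) * v k).im| := fun j k => by
    rw [show conj (w j) * w k = (s j * s k : ℝ) * (conj (v j) * v k) by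
      simp only [w, map_mul, conj_ofReal]; push_cast; ring]
    rw [im_ofReal_mul, abs_mul, abs_mul, hs_abs, hs_abs, one_mul, one_mul]
  have hnorm : ∀ j, ‖w j‖ = ‖v j‖ := fun j => by
    rw [norm_mul, norm_real, Real.norm_eq_abs, hs_abs, one_mul]
  calc ∑ j, ∑ k, |(conj (v j) * v k).im| = ∑ j, ∑ k, |(conj (u j) * u k).im| := by
        simp only [u, Function.comp_apply, habs]
        rw [← Equiv.sum_comp σ fun j => ∑ k, |(conj (v j) * v k).im|]
        exact sum_congr rfl fun j _ => (Equiv.sum_comp σ fun k => |(conj (v (σ j)) * v k).im|).symm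
    _ = (star u ⬝ᵥ ((transitiveTournament n).map ofReal *ᵥ u)).im :=
        sum_abs_im_conj_mul_eq_im hsorted
    _ ≤ ‖star u ⬝ᵥ ((transitiveTournament n).map ofReal *ᵥ u)‖ := 
        (le_abs_self _).trans (abs_im_le_norm _)
    _ ≤ Real.cot (π / (2 * n)) * ∑ j, ‖u j‖ ^ 2 :=
        norm_star_dotProduct_transitiveTournament_mulVec_le hn u
    _ = Real.cot (π / (2 * n)) * ∑ j, ‖v j‖ ^ 2 := by
        simp only [u, Function.comp_apply, hnorm, Equiv.sum_comp σ fun j => ‖v j‖ ^ 2]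

theorem stmt_7 (n : ℕ) (hn : 0 < n)
    (S : Matrix (Fin n) (Fin n) ℂ)
    (hskew : Sᵀ = -S)
    (hentries : ∀ i j, S i j = 0 ∨ S i j = 1 ∨ S i j = -1) :
    ∀ μ ∈ spectrum ℂ S, ‖μ‖ ≤ Real.cot (π / (2 * n)) := by
  intro μ hμ
  obtain ⟨v, hv, hv0⟩ := (Module.End.hasEigenvalue_iff_mem_spectrum.mpr
    ((spectrum_toLin' S).symm ▸ hμ)).exists_hasEigenvector
  rw [Module.End.mem_eigenspace_iff, toLin'_apply] at hv
  set A := S.map re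
  have hSA : S = A.map ofReal := by
    ext j k
    rcases hentries j k with h | h | h <;> simp [A, h]
  have hA : Aᵀ = -A := by
    ext j k
    simpa [A] using congrArg re (congrFun (congrFun hskew j) k)
  have hA1 : ∀ j k, |A j k| ≤ 1 := fun j k => by
    rcases hentries j k with h | h | h <;> simp [A, h]
  have hpos : 0 < ∑ j, ‖v j‖ ^ 2 := by
    obtain ⟨j, hj⟩ := Function.ne_iff.mp hv0
    exact sum_pos' (fun k _ => by positivity) ⟨j, mem_univ j, pow_pos (norm_pos_iff.mpr hj) 2⟩
  have hquad : star v ⬝ᵥ (S *ᵥ v) = μ * ((∑ j, ‖v j‖ ^ 2 : ℝ) : ℂ) := by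
    rw [hv, dotProduct_smul, star_dotProduct_self_eq, smul_eq_mul]
  refine le_of_mul_le_mul_right ?_ hpos
  calc ‖μ‖ * ∑ j, ‖v j‖ ^ 2 = ‖star v ⬝ᵥ (A.map ofReal *ᵥ v)‖ := by
        rw [← hSA, hquad, norm_mul, norm_real, Real.norm_of_nonneg hpos.le]
    _ ≤ ∑ j, ∑ k, |(conj (v j) * v k).im| := norm_star_dotProduct_mulVec_le_sum_abs_im hA hA1 v
    _ ≤ Real.cot (π / (2 * n)) * ∑ j, ‖v j‖ ^ 2 := sum_abs_im_conj_mul_le hn.ne' v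
end

section
/- Let R be a positive semidefinite Hermitian (k+1)×(k+1) matrix of the block form R = [[c, b*], [b, Q]] where Q is k×k Hermitian positive semidefinite, b is a k×1 vector, and c ≥ 0. If η_k is any upper bound on the maximum eigenvalue of Q, then the maximum eigenvalue of R satisfies λ_max(R) ≤ (c + η_k)/2 + sqrt( (c - η_k)²/4 + b*b ). -/
/-!
Writing a vector as `w = (a, x)`, the quadratic form of `R` is
`c |a|² + 2 Re (ā ⟪b, x⟫) + x* Q x ≤ c |a|² + 2 ‖b‖ |a| ‖x‖ + η ‖x‖²`
by Cauchy–Schwarz and `Q ≤ η`. The right-hand side is the quadratic form of the real matrix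
`[[c, ‖b‖], [‖b‖, η]]` at `(|a|, ‖x‖)`, so it is at most its largest eigenvalue
`(c + η) / 2 + √((c - η)² / 4 + ‖b‖²)` times `‖w‖²`. A Hermitian matrix whose quadratic form is
bounded by `M ‖w‖²` has all eigenvalues at most `M`, since `M - R` is then positive semidefinite.
-/

open Complex Matrix
open scoped ComplexOrder Pointwise

namespace Matrix

variable {n 𝕜 : Type*} [Fintype n] [RCLike 𝕜]

theorem re_star_dotProduct_self (x : n → 𝕜) : RCLike.re (star x ⬝ᵥ x) = ∑ i, ‖x i‖ ^ 2 := by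
  simp only [dotProduct, Pi.star_apply, RCLike.star_def, RCLike.conj_mul, map_sum]
  norm_cast

theorem norm_star_dotProduct_le (b x : n → 𝕜) :
    ‖star b ⬝ᵥ x‖ ≤ √(∑ i, ‖b i‖ ^ 2) * √(∑ i, ‖x i‖ ^ 2) :=
  calc ‖star b ⬝ᵥ x‖ ≤ ∑ i, ‖b i‖ * ‖x i‖ := by
        simpa [dotProduct] using norm_sum_le Finset.univ fun i => star (b i) * x i
    _ ≤ _ := Real.sum_mul_le_sqrt_mul_sqrt _ _ _

variable [DecidableEq n] {A : Matrix n n 𝕜}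

theorem IsHermitian.algebraMap_sub (hA : A.IsHermitian) (η : ℝ) :
    (algebraMap ℝ (Matrix n n 𝕜) η - A).IsHermitian :=
  .sub (by simp [Algebra.algebraMap_eq_smul_one, IsHermitian, conjTranspose_smul]) hA

theorem IsHermitian.posSemidef_algebraMap_sub_iff (hA : A.IsHermitian) (η : ℝ) :
    (algebraMap ℝ (Matrix n n 𝕜) η - A).PosSemidef ↔ ∀ i, hA.eigenvalues i ≤ η := by
  have hB := hA.algebraMap_sub η
  have hspec : Set.range hB.eigenvalues = {η} - Set.range hA.eigenvalues := by
    rw [← hB.spectrum_real_eq_range_eigenvalues, ← spectrum.singleton_sub_eq,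
      hA.spectrum_real_eq_range_eigenvalues]
  rw [hB.posSemidef_iff_eigenvalues_nonneg, Pi.le_def]
  simp only [Pi.zero_apply]
  rw [← Set.forall_mem_range (p := fun t => 0 ≤ t), hspec]
  simp

theorem IsHermitian.forall_re_dotProduct_mulVec_le_iff (hA : A.IsHermitian) (η : ℝ) :
    (∀ x, RCLike.re (star x ⬝ᵥ A *ᵥ x) ≤ η * ∑ i, ‖x i‖ ^ 2) ↔ ∀ i, hA.eigenvalues i ≤ η := by
  rw [← hA.posSemidef_algebraMap_sub_iff, posSemidef_iff_dotProduct_mulVec,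
    and_iff_right (hA.algebraMap_sub η)]
  refine forall_congr' fun x => ?_
  rw [RCLike.nonneg_iff, and_iff_left ((hA.algebraMap_sub η).im_star_dotProduct_mulVec_self x)]
  simp [sub_mulVec, Algebra.algebraMap_eq_smul_one, smul_mulVec, RCLike.smul_re,
    re_star_dotProduct_self]

end Matrix

def borderedMatrix {n : Type*} (c : ℝ) (b : n → ℂ) (Q : Matrix n n ℂ) :
    Matrix (Fin 1 ⊕ n) (Fin 1 ⊕ n) ℂ :=
  fromBlocks (of fun _ _ => (c : ℂ)) (of fun _ j => star (b j)) (of fun i _ => b i) Q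

theorem re_dotProduct_borderedMatrix_mulVec {n : Type*} [Fintype n] (c : ℝ) (b : n → ℂ)
    (Q : Matrix n n ℂ) (a : ℂ) (x : n → ℂ) :
    (star (Sum.elim ![a] x) ⬝ᵥ borderedMatrix c b Q *ᵥ Sum.elim ![a] x).re
      = c * ‖a‖ ^ 2 + 2 * (star a * (star b ⬝ᵥ x)).re + (star x ⬝ᵥ Q *ᵥ x).re := by
  have hstar : star (Sum.elim ![a] x) = Sum.elim ![star a] (star x) := by
    ext (i | i) <;> simp [Fin.fin_one_eq_zero]
  have hcorner : ![star a] ⬝ᵥ (of fun _ _ => (c : ℂ) : Matrix (Fin 1) (Fin 1) ℂ) *ᵥ ![a]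
      = c * (star a * a) := by
    simp [dotProduct, mulVec, mul_left_comm]
  have hrow : ![star a] ⬝ᵥ (of fun _ j => star (b j) : Matrix (Fin 1) n ℂ) *ᵥ x
      = star a * (star b ⬝ᵥ x) := by
    simp [dotProduct, mulVec]
  have hcol : star x ⬝ᵥ (of fun i _ => b i : Matrix n (Fin 1) ℂ) *ᵥ ![a]
      = star (star a * (star b ⬝ᵥ x)) := by
    simp [dotProduct, mulVec, Finset.mul_sum, mul_comm, mul_left_comm]
  rw [hstar, borderedMatrix, fromBlocks_mulVec, Sum.elim_comp_inl, Sum.elim_comp_inr,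
    sumElim_dotProduct_sumElim, dotProduct_add, dotProduct_add, hcorner, hrow, hcol]
  simp only [add_re, re_ofReal_mul, Complex.star_def, conj_re, Complex.conj_mul', ← ofReal_pow,
    ofReal_re]
  ring

/-- The right-hand side is the largest eigenvalue of the real matrix `[[c, β], [β, η]]`. -/
theorem mul_sq_add_two_mul_mul_add_mul_sq_le (c η β a t : ℝ) :
    c * a ^ 2 + 2 * β * a * t + η * t ^ 2 ≤
      ((c + η) / 2 + √((c - η) ^ 2 / 4 + β ^ 2)) * (a ^ 2 + t ^ 2) := by
  set S := √((c - η) ^ 2 / 4 + β ^ 2)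
  have hS2 : S ^ 2 = (c - η) ^ 2 / 4 + β ^ 2 := Real.sq_sqrt (by positivity)
  have key : 2 * S * (((c + η) / 2 + S) * (a ^ 2 + t ^ 2) - (c * a ^ 2 + 2 * β * a * t + η * t ^ 2))
      = ((S - (c - η) / 2) * a - β * t) ^ 2 + ((S + (c - η) / 2) * t - β * a) ^ 2 := by
    linear_combination (a ^ 2 + t ^ 2) * hS2
  rcases (Real.sqrt_nonneg _ : 0 ≤ S).eq_or_lt with hS | hS
  · have hβ : β = 0 := by nlinarith
    have hcη : c = η := by nlinarith
    subst hβ hcη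
    nlinarith
  · nlinarith [sq_nonneg ((S - (c - η) / 2) * a - β * t), sq_nonneg ((S + (c - η) / 2) * t - β * a)]

theorem stmt_8_general (k : ℕ) (c : ℝ) (b : Fin k → ℂ)
    (Q : Matrix (Fin k) (Fin k) ℂ) (hQ : Q.PosSemidef)
    (R : Matrix (Fin 1 ⊕ Fin k) (Fin 1 ⊕ Fin k) ℂ)
    (hR : R = Matrix.fromBlocks
      (Matrix.of fun _ _ : Fin 1 => (c : ℂ))
      (Matrix.of fun (_ : Fin 1) j => star (b j))
      (Matrix.of fun i (_ : Fin 1) => b i) Q)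
    (hRpsd : R.PosSemidef)
    (η : ℝ) (hη : ∀ i, hQ.isHermitian.eigenvalues i ≤ η) :
    ∀ i, hRpsd.isHermitian.eigenvalues i ≤
      (c + η) / 2 + Real.sqrt ((c - η) ^ 2 / 4 + ∑ j, ‖b j‖ ^ 2) := by
  replace hR : R = borderedMatrix c b Q := hR
  refine (hRpsd.isHermitian.forall_re_dotProduct_mulVec_le_iff _).mp fun w => ?_
  obtain ⟨a, x, rfl⟩ : ∃ a x, w = Sum.elim ![a] x :=
    ⟨w (.inl 0), w ∘ .inr, by ext (i | i) <;> simp [Fin.fin_one_eq_zero]⟩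
  set B := √(∑ j, ‖b j‖ ^ 2)
  set T := √(∑ j, ‖x j‖ ^ 2)
  have hB : B ^ 2 = ∑ j, ‖b j‖ ^ 2 := Real.sq_sqrt (by positivity)
  have hT : T ^ 2 = ∑ j, ‖x j‖ ^ 2 := Real.sq_sqrt (by positivity)
  have hcross : (star a * (star b ⬝ᵥ x)).re ≤ ‖a‖ * (B * T) :=
    (re_le_norm _).trans <| by
      rw [norm_mul, norm_star]; gcongr; exact norm_star_dotProduct_le b x
  have hQx := (hQ.isHermitian.forall_re_dotProduct_mulVec_le_iff η).mpr hη x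
  rw [RCLike.re_to_complex, ← hT] at hQx
  rw [RCLike.re_to_complex, hR, re_dotProduct_borderedMatrix_mulVec, ← hB]
  calc _ ≤ c * ‖a‖ ^ 2 + 2 * B * ‖a‖ * T + η * T ^ 2 := by linarith
    _ ≤ _ := mul_sq_add_two_mul_mul_add_mul_sq_le _ _ _ _ _
    _ = _ := by simp [Fintype.sum_sum_type, hT]

theorem stmt_8 (k : ℕ) (c : ℝ) (hc : 0 ≤ c) (b : Fin k → ℂ)
    (Q : Matrix (Fin k) (Fin k) ℂ) (hQ : Q.PosSemidef)
    (R : Matrix (Fin 1 ⊕ Fin k) (Fin 1 ⊕ Fin k) ℂ)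
    (hR : R = Matrix.fromBlocks
      (Matrix.of fun _ _ : Fin 1 => (c : ℂ))
      (Matrix.of fun (_ : Fin 1) j => star (b j))
      (Matrix.of fun i (_ : Fin 1) => b i) Q)
    (hRpsd : R.PosSemidef)
    (η : ℝ) (hη : ∀ i, hQ.isHermitian.eigenvalues i ≤ η) :
    ∀ i, hRpsd.isHermitian.eigenvalues i ≤
      (c + η) / 2 + Real.sqrt ((c - η) ^ 2 / 4 + ∑ j, ‖b j‖ ^ 2) :=
  stmt_8_general k c b Q hQ R hR hRpsd η hη
end

section
/- Let p ≥ 7 be a prime with p ≡ 3 (mod 4), and let Φ be the Paley measurement matrix of Definition (Paley tight frame). Then for every k with 3 ≤ k ≤ p, the restricted isometry constant of order k satisfies δ_k ≤ (k - 1 - 1/(c(k-1)))/√p, where c = 1/(2(2-√3)). -/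
open Complex Matrix
open scoped Classical

/-- The Paley measurement matrix: rows indexed by the quadratic residues
(including 0) of `ZMod p`, columns by `ZMod p`. -/
noncomputable def Paley (p : ℕ) : Matrix {m : ZMod p // IsSquare m} (ZMod p) ℂ :=
  Matrix.of fun m n =>
    (if (m : ZMod p) = 0 then (Real.sqrt (1 / p) : ℂ) else (Real.sqrt (2 / p) : ℂ)) *
      Complex.exp (2 * Real.pi * I * (((m : ZMod p).val * n.val : ℕ) : ℂ) / p)

/-!
Let `χ` be the quadratic character of `ZMod p`, `ψ` the standard additive character and
`g = ∑ m, χ m ψ m` their Gauss sum. Writing the sum over the squares `m` with weights `1 + χ m`,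
the entries of `Φᴴ Φ` reduce to `∑ m, ψ (m d) = p [d = 0]` and `∑ m, χ m ψ (m d) = χ d g`, so
`Φᴴ Φ = 1 + (g / p) • Jᵀ` with `J a b = χ (a - b)` the Jacobsthal matrix. For `p ≡ 3 (mod 4)`
the matrix `J` is skew-symmetric, so `x* Jᵀ x = i ∑ a b, Jᵀ a b Im (x̄ a x b)`, and `|g| = √p`
gives `|‖Φ x‖² - ‖x‖²| = |∑ a b, Jᵀ a b Im (x̄ a x b)| / √p`. Cauchy–Schwarz over the
`k (k - 1)` off-diagonal pairs of the support, together with `∑ a b, Im (x̄ a x b)² ≤ ‖x‖⁴ / 2`,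
bounds this by `√(k (k - 1) / 2) ‖x‖² / √p`, and for `k ≥ 3`
`√(k (k - 1) / 2) ≤ (√3 / 2) (k - 1) ≤ k - 1 - 1 / (c (k - 1))`.
-/
open Finset

section QuadraticForm

variable {ι : Type*} [Fintype ι]

lemma ofReal_sum_norm_sq (y : ι → ℂ) : ((∑ i, ‖y i‖ ^ 2 : ℝ) : ℂ) = star y ⬝ᵥ y := by
  push_cast
  exact Finset.sum_congr rfl fun i _ => by rw [mul_comm, ← Complex.mul_conj']; rfl

lemma ofReal_sum_norm_sq_mulVec {m : Type*} [Fintype m] (A : Matrix m ι ℂ) (x : ι → ℂ) :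
    ((∑ i, ‖(A *ᵥ x) i‖ ^ 2 : ℝ) : ℂ) = star x ⬝ᵥ (Aᴴ * A) *ᵥ x := by
  rw [ofReal_sum_norm_sq, star_mulVec, ← dotProduct_mulVec, mulVec_mulVec]

lemma sum_sum_mul_eq_zero_of_antisymm (S f : ι → ι → ℝ) (hS : ∀ a b, S b a = -S a b)
    (hf : ∀ a b, f b a = f a b) :
    ∑ a, ∑ b, S a b * f a b = 0 := by
  have h : ∑ a, ∑ b, S a b * f a b = -∑ a, ∑ b, S a b * f a b := by
    conv_lhs => rw [Finset.sum_comm]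
    simp only [← Finset.sum_neg_distrib]
    exact Finset.sum_congr rfl fun b _ => Finset.sum_congr rfl fun a _ => by
      rw [hS b a, hf a b]; ring
  linarith

lemma star_dotProduct_mulVec_of_antisymm (S : Matrix ι ι ℝ) (hS : ∀ a b, S b a = -S a b)
    (x : ι → ℂ) :
    star x ⬝ᵥ S.map ((↑) : ℝ → ℂ) *ᵥ x
      = (∑ a, ∑ b, S a b * (star (x a) * x b).im : ℝ) * I := by
  have hre := sum_sum_mul_eq_zero_of_antisymm S (fun a b => (star (x a) * x b).re) hS
    (fun a b => by simp only [mul_re, star_def, conj_re, conj_im]; ring)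
  have hsum : star x ⬝ᵥ S.map ((↑) : ℝ → ℂ) *ᵥ x
      = ∑ a, ∑ b, (S a b : ℂ) * (star (x a) * x b) := by
    simp only [dotProduct, mulVec, map_apply, Finset.mul_sum, Pi.star_apply]
    exact Finset.sum_congr rfl fun a _ => Finset.sum_congr rfl fun b _ => by ring
  rw [hsum]
  apply Complex.ext
  · simpa [Complex.re_sum] using hre
  · simp [Complex.im_sum]

lemma sum_sum_sq_mul_sub_mul_le (u v : ι → ℝ) :
    ∑ a, ∑ b, (u a * v b - v a * u b) ^ 2 ≤ (∑ a, (u a ^ 2 + v a ^ 2)) ^ 2 / 2 := by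
  have hexpand : ∑ a, ∑ b, (u a * v b - v a * u b) ^ 2
      = (∑ a, u a ^ 2) * (∑ b, v b ^ 2) + (∑ a, v a ^ 2) * (∑ b, u b ^ 2)
        - 2 * ((∑ a, u a * v a) * ∑ b, u b * v b) := by
    rw [Finset.sum_mul_sum, Finset.sum_mul_sum, Finset.sum_mul_sum, Finset.mul_sum]
    simp only [Finset.mul_sum, ← Finset.sum_add_distrib, ← Finset.sum_sub_distrib]
    exact Finset.sum_congr rfl fun a _ => Finset.sum_congr rfl fun b _ => by ring
  rw [hexpand, Finset.sum_add_distrib]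
  nlinarith [sq_nonneg (∑ a, u a * v a), sq_nonneg (∑ a, u a ^ 2 - ∑ a, v a ^ 2)]

lemma sum_sum_im_star_mul_sq_le (x : ι → ℂ) :
    ∑ a, ∑ b, (star (x a) * x b).im ^ 2 ≤ (∑ a, ‖x a‖ ^ 2) ^ 2 / 2 := by
  convert sum_sum_sq_mul_sub_mul_le (fun a => (x a).re) (fun a => (x a).im) using 4
  · simp only [RCLike.star_def, mul_im, conj_re, conj_im]; ring
  · rw [Complex.sq_norm, Complex.normSq_apply]; ring

variable [DecidableEq ι]

lemma sq_sum_sum_mul_le_card_offDiag_mul (S w : ι → ι → ℝ) (T : Finset ι)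
    (hdiag : ∀ a, S a a = 0) (hS : ∀ a b, S a b ^ 2 ≤ 1)
    (hw : ∀ a b, a ∉ T ∨ b ∉ T → w a b = 0) :
    (∑ a, ∑ b, S a b * w a b) ^ 2 ≤ #T.offDiag * ∑ a, ∑ b, w a b ^ 2 := by
  have hsupp : ∑ a, ∑ b, S a b * w a b = ∑ q ∈ T.offDiag, S q.1 q.2 * w q.1 q.2 := by
    rw [← Finset.sum_product']
    refine (Finset.sum_subset (subset_univ _) fun q _ hq => ?_).symm
    rw [mem_offDiag] at hq
    by_cases hq' : q.1 ∈ T ∧ q.2 ∈ T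
    · rw [show q.1 = q.2 by tauto, hdiag, zero_mul]
    · rw [hw _ _ (by tauto), mul_zero]
  have hS_sum : ∑ q ∈ T.offDiag, S q.1 q.2 ^ 2 ≤ #T.offDiag := by
    simpa using Finset.sum_le_sum fun q (_ : q ∈ T.offDiag) => hS q.1 q.2
  have hw_sum : ∑ q ∈ T.offDiag, w q.1 q.2 ^ 2 ≤ ∑ a, ∑ b, w a b ^ 2 := by
    rw [← Finset.sum_product']
    exact Finset.sum_le_sum_of_subset_of_nonneg (subset_univ _) fun _ _ _ => sq_nonneg _
  rw [hsupp]
  calc _ ≤ (∑ q ∈ T.offDiag, S q.1 q.2 ^ 2) * ∑ q ∈ T.offDiag, w q.1 q.2 ^ 2 :=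
        sum_mul_sq_le_sq_mul_sq _ _ _
    _ ≤ _ := mul_le_mul hS_sum hw_sum (sum_nonneg fun _ _ => sq_nonneg _) (Nat.cast_nonneg _)

lemma sq_sum_sum_mul_im_le (S : ι → ι → ℝ) (hdiag : ∀ a, S a a = 0)
    (hS : ∀ a b, S a b ^ 2 ≤ 1) {x : ι → ℂ} {T : Finset ι} (hx : ∀ i ∉ T, x i = 0) {k : ℕ}
    (hT : #T ≤ k) :
    (∑ a, ∑ b, S a b * (star (x a) * x b).im) ^ 2
      ≤ k * (k - 1) / 2 * (∑ a, ‖x a‖ ^ 2) ^ 2 := by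
  have hcard : (#T.offDiag : ℝ) ≤ k * (k - 1) := by
    have h : #T.offDiag ≤ k * k - k := by
      rw [offDiag_card, ← Nat.mul_sub_one, ← Nat.mul_sub_one]
      exact Nat.mul_le_mul hT (Nat.sub_le_sub_right hT 1)
    have h' := (Nat.cast_le (α := ℝ)).mpr h
    rw [Nat.cast_sub (Nat.le_mul_self k), Nat.cast_mul] at h'
    linarith
  calc _ ≤ #T.offDiag * ∑ a, ∑ b, (star (x a) * x b).im ^ 2 :=
        sq_sum_sum_mul_le_card_offDiag_mul S _ T hdiag hS fun a b hab => by
          rcases hab with h | h <;> simp [hx _ h]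
    _ ≤ k * (k - 1) * ((∑ a, ‖x a‖ ^ 2) ^ 2 / 2) :=
        mul_le_mul hcard (sum_sum_im_star_mul_sq_le x)
          (sum_nonneg fun _ _ => sum_nonneg fun _ _ => sq_nonneg _)
          ((Nat.cast_nonneg _).trans hcard)
    _ = _ := by ring

end QuadraticForm

noncomputable def complexQuadraticChar (F : Type*) [Field F] [Fintype F] [DecidableEq F] :
    MulChar F ℂ :=
  (quadraticChar F).ringHomComp (Int.castRingHom ℂ)

def jacobsthal (F : Type*) [Field F] [Fintype F] [DecidableEq F] : Matrix F F ℝ :=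
  of fun a b => quadraticChar F (a - b)

section FiniteField

variable {F : Type*} [Field F] [Fintype F] [DecidableEq F]

@[simp] lemma complexQuadraticChar_apply (a : F) :
    complexQuadraticChar F a = quadraticChar F a := rfl

lemma complexQuadraticChar_ne_one (hF : ringChar F ≠ 2) : complexQuadraticChar F ≠ 1 :=
  (MulChar.ringHomComp_ne_one_iff (RingHom.injective_int _)).mpr (quadraticChar_ne_one hF)

lemma isQuadratic_complexQuadraticChar : (complexQuadraticChar F).IsQuadratic :=
  (quadraticChar_isQuadratic F).comp _

lemma norm_gaussSum_complexQuadraticChar (hF : ringChar F ≠ 2) {ψ : AddChar F ℂ}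
    (hψ : ψ.IsPrimitive) :
    ‖gaussSum (complexQuadraticChar F) ψ‖ = √(Fintype.card F) := by
  have hsq := gaussSum_sq (complexQuadraticChar_ne_one hF) isQuadratic_complexQuadraticChar hψ
  have hχ : ‖complexQuadraticChar F (-1)‖ = 1 := by
    rcases quadraticChar_dichotomy (F := F) (neg_ne_zero.mpr one_ne_zero) with h | h <;>
      simp [h]
  rw [← Real.sqrt_sq (norm_nonneg _), ← norm_pow, hsq, norm_mul, hχ, one_mul, norm_natCast]

lemma sum_isSquare_eq_sum_one_add_quadraticChar {R : Type*} [CommRing R] (f : F → R) :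
    ∑ m : {m : F // IsSquare m}, (if (m : F) = 0 then 1 else 2) * f m
      = ∑ m, (1 + (quadraticChar F m : R)) * f m := by
  rw [← Finset.sum_subtype (univ.filter IsSquare) (by simp)
    (fun m => (if m = 0 then 1 else 2) * f m), Finset.sum_filter]
  refine Finset.sum_congr rfl fun m _ => ?_
  by_cases hm0 : m = 0
  · simp [hm0]
  by_cases hm : IsSquare m
  · rw [if_pos hm, if_neg hm0, (quadraticChar_one_iff_isSquare hm0).mpr hm]
    norm_num
  · rw [if_neg hm, quadraticChar_neg_one_iff_not_isSquare.mpr hm]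
    simp

lemma sum_mulChar_mul_mulShift {R : Type*} [CommRing R] [IsDomain R] {χ : MulChar F R}
    (hχ : χ ≠ 1) (hχ₂ : χ.IsQuadratic) (ψ : AddChar F R) (d : F) :
    ∑ m, χ m * ψ (m * d) = χ d * gaussSum χ ψ := by
  by_cases hd : d = 0
  · simp [hd, MulChar.sum_eq_zero_of_ne_one hχ, MulChar.map_zero]
  · have h := gaussSum_mulShift_eq χ ψ (Units.mk0 d hd)
    rw [hχ₂.inv] at h
    simpa [gaussSum, mul_comm _ d] using h

lemma jacobsthal_apply_swap (hF : Fintype.card F % 4 = 3) (a b : F) :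
    jacobsthal F b a = -jacobsthal F a b := by
  have hneg : quadraticChar F (-1) = -1 :=
    quadraticChar_neg_one_iff_not_isSquare.mpr
      (FiniteField.isSquare_neg_one_iff.not_left.mpr hF)
  simp only [jacobsthal, of_apply]
  rw [← neg_sub, ← neg_one_mul, map_mul, hneg]
  push_cast
  ring

lemma jacobsthal_apply_self (a : F) : jacobsthal F a a = 0 := by
  simp [jacobsthal]

lemma jacobsthal_apply_sq_le_one (a b : F) : jacobsthal F a b ^ 2 ≤ 1 := by
  rcases quadraticChar_isQuadratic F (a - b) with h | h | h <;>
    simp only [jacobsthal, of_apply, h] <;> norm_num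

end FiniteField

namespace Paley

variable {p : ℕ} [NeZero p]

lemma apply_eq_stdAddChar (m : {m : ZMod p // IsSquare m}) (n : ZMod p) :
    Paley p m n = (if (m : ZMod p) = 0 then (√(1 / p) : ℂ) else (√(2 / p) : ℂ))
      * ZMod.stdAddChar ((m : ZMod p) * n) := by
  rw [show (m : ZMod p) * n = (((m : ZMod p).val * n.val : ℕ) : ℤ) by simp,
    ZMod.stdAddChar_coe]
  simp [Paley]

lemma star_apply_mul_apply (m : {m : ZMod p // IsSquare m}) (n n' : ZMod p) :
    star (Paley p m n) * Paley p m n'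
      = (if (m : ZMod p) = 0 then 1 else 2)
        * (ZMod.stdAddChar ((m : ZMod p) * (n' - n)) / p) := by
  have hw : ∀ c : ℝ, 0 ≤ c → star (√c : ℂ) * √c = c := fun c hc => by
    rw [star_def, conj_ofReal, ← ofReal_mul, Real.mul_self_sqrt hc]
  have hψ : star (ZMod.stdAddChar ((m : ZMod p) * n)) * ZMod.stdAddChar ((m : ZMod p) * n')
      = ZMod.stdAddChar ((m : ZMod p) * (n' - n)) := by
    rw [star_def, ← AddChar.map_neg_eq_conj, ← AddChar.map_add_eq_mul]
    ring_nf
  rw [apply_eq_stdAddChar, apply_eq_stdAddChar, star_mul', mul_mul_mul_comm, hψ]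
  split_ifs <;> rw [hw _ (by positivity)] <;> push_cast <;> ring

variable [Fact p.Prime]

lemma conjTranspose_mul_self (hp : p ≠ 2) :
    (Paley p)ᴴ * Paley p = 1 + (gaussSum (complexQuadraticChar (ZMod p)) ZMod.stdAddChar / p) •
      (jacobsthal (ZMod p))ᵀ.map ((↑) : ℝ → ℂ) := by
  have hF : ringChar (ZMod p) ≠ 2 := by rwa [ZMod.ringChar_zmod_n]
  ext n n'
  simp only [mul_apply, conjTranspose_apply, star_apply_mul_apply]
  rw [sum_isSquare_eq_sum_one_add_quadraticChar
    (fun m => ZMod.stdAddChar (m * (n' - n)) / (p : ℂ))]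
  have hsum := AddChar.sum_mulShift (n' - n) (ZMod.isPrimitive_stdAddChar p)
  have hgauss := sum_mulChar_mul_mulShift (complexQuadraticChar_ne_one hF)
    isQuadratic_complexQuadraticChar ZMod.stdAddChar (n' - n)
  simp only [complexQuadraticChar_apply] at hgauss
  calc _ = (∑ m, ZMod.stdAddChar (m * (n' - n)) + ∑ m : ZMod p,
        (quadraticChar (ZMod p) m : ℂ) * ZMod.stdAddChar (m * (n' - n))) / p := by
        rw [← Finset.sum_add_distrib, Finset.sum_div]
        exact Finset.sum_congr rfl fun m _ => by ring
    _ = _ := by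
        rw [hsum, hgauss, ZMod.card]
        simp only [Matrix.add_apply, Matrix.smul_apply, map_apply, transpose_apply, jacobsthal,
          of_apply, smul_eq_mul]
        by_cases h : n = n'
        · subst h
          simp [one_apply_eq]
        · rw [if_neg (sub_ne_zero.mpr (Ne.symm h)), one_apply_ne h]
          push_cast
          ring

lemma abs_sum_norm_sq_mulVec_sub (hp : p % 4 = 3) (x : ZMod p → ℂ) :
    |∑ m, ‖(Paley p *ᵥ x) m‖ ^ 2 - ∑ i, ‖x i‖ ^ 2|
      = |∑ a, ∑ b, (jacobsthal (ZMod p))ᵀ a b * (star (x a) * x b).im| / √p := by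
  have hp2 : p ≠ 2 := by omega
  have hskew : ∀ a b, (jacobsthal (ZMod p))ᵀ b a = -(jacobsthal (ZMod p))ᵀ a b :=
    fun a b => jacobsthal_apply_swap (by rwa [ZMod.card]) b a
  have hR := ofReal_sum_norm_sq_mulVec (Paley p) x
  rw [conjTranspose_mul_self hp2, add_mulVec, one_mulVec, smul_mulVec, dotProduct_add,
    dotProduct_smul, star_dotProduct_mulVec_of_antisymm _ hskew, ← ofReal_sum_norm_sq,
    ← sub_eq_iff_eq_add', ← ofReal_sub] at hR
  rw [← Real.norm_eq_abs, ← Complex.norm_real, hR, smul_eq_mul, norm_mul, norm_mul, norm_div,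
    norm_gaussSum_complexQuadraticChar (by rwa [ZMod.ringChar_zmod_n])
    (ZMod.isPrimitive_stdAddChar p), ZMod.card, norm_I, mul_one, norm_real, Real.norm_eq_abs,
    norm_natCast, Real.sqrt_div_self']
  ring

end Paley

lemma rip_constant_bound {k c : ℝ} (hk : 3 ≤ k) (hc : c = 1 / (2 * (2 - √3))) :
    0 ≤ k - 1 - 1 / (c * (k - 1)) ∧ k * (k - 1) / 2 ≤ (k - 1 - 1 / (c * (k - 1))) ^ 2 := by
  have hs3 : √3 ^ 2 = 3 := Real.sq_sqrt (by norm_num)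
  have hs2 : √3 < 2 := by nlinarith [Real.sqrt_nonneg 3]
  have hk1 : 0 < k - 1 := by linarith
  have hgap : k - 1 - 1 / (c * (k - 1)) - √3 / 2 * (k - 1)
      = (2 - √3) * ((k - 1) ^ 2 - 4) / (2 * (k - 1)) := by
    rw [hc]
    field_simp
    ring
  have hlow : √3 / 2 * (k - 1) ≤ k - 1 - 1 / (c * (k - 1)) := by
    rw [← sub_nonneg, hgap]
    exact div_nonneg (mul_nonneg (by linarith) (by nlinarith)) (by linarith)
  refine ⟨le_trans (by positivity) hlow, le_trans ?_ (pow_le_pow_left₀ (by positivity) hlow 2)⟩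
  rw [mul_pow, div_pow, hs3]
  nlinarith

theorem stmt_14_general (p : ℕ) [NeZero p] (hp : p.Prime)
    (hp3 : p % 4 = 3) (k : ℕ) (hk3 : 3 ≤ k)
    (c δ : ℝ) (hc : c = 1 / (2 * (2 - Real.sqrt 3)))
    (hδ : δ = ((k : ℝ) - 1 - 1 / (c * ((k : ℝ) - 1))) / Real.sqrt p)
    (x : ZMod p → ℂ) (T : Finset (ZMod p)) (hT : T.card ≤ k)
    (hsupp : ∀ i ∉ T, x i = 0) :
    (1 - δ) * ∑ i, ‖x i‖ ^ 2 ≤ ∑ m, ‖(Paley p *ᵥ x) m‖ ^ 2 ∧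
    ∑ m, ‖(Paley p *ᵥ x) m‖ ^ 2 ≤ (1 + δ) * ∑ i, ‖x i‖ ^ 2 := by
  have : Fact p.Prime := ⟨hp⟩
  have hsqrt_p : 0 < √(p : ℝ) := Real.sqrt_pos.mpr (by exact_mod_cast hp.pos)
  obtain ⟨hW, hW_sq⟩ := rip_constant_bound (k := k) (by exact_mod_cast hk3) hc
  have hδp : δ * √p = k - 1 - 1 / (c * (k - 1)) := by rw [hδ, div_mul_cancel₀ _ hsqrt_p.ne']
  rw [← hδp] at hW hW_sq
  set N := ∑ i, ‖x i‖ ^ 2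
  set Q := ∑ a, ∑ b, (jacobsthal (ZMod p))ᵀ a b * (star (x a) * x b).im
  have hQ : Q ^ 2 ≤ k * (k - 1) / 2 * N ^ 2 :=
    sq_sum_sum_mul_im_le (jacobsthal (ZMod p))ᵀ (fun a => jacobsthal_apply_self a)
      (fun a b => jacobsthal_apply_sq_le_one b a) hsupp (k := k) hT
  have hQ_abs : |Q| ≤ δ * √p * N :=
    abs_le_of_sq_le_sq (hQ.trans (by rw [mul_pow]; gcongr)) (by positivity)
  have hdev : |∑ m, ‖(Paley p *ᵥ x) m‖ ^ 2 - N| ≤ δ * N := by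
    rw [Paley.abs_sum_norm_sq_mulVec_sub hp3, div_le_iff₀ hsqrt_p]
    linarith
  constructor <;> linarith [abs_le.mp hdev]

/-- The RIP constant of order `k` of the Paley matrix is at most
`(k - 1 - 1/(c(k-1)))/√p` with `c = 1/(2(2-√3))`: the restricted isometry
inequalities hold with this constant for every `k`-sparse vector. -/
theorem stmt_14 (p : ℕ) [NeZero p] (hp : p.Prime) (hp7 : 7 ≤ p)
    (hp3 : p % 4 = 3) (k : ℕ) (hk3 : 3 ≤ k) (hkp : k ≤ p)
    (c δ : ℝ) (hc : c = 1 / (2 * (2 - Real.sqrt 3)))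
    (hδ : δ = ((k : ℝ) - 1 - 1 / (c * ((k : ℝ) - 1))) / Real.sqrt p)
    (x : ZMod p → ℂ) (T : Finset (ZMod p)) (hT : T.card ≤ k)
    (hsupp : ∀ i ∉ T, x i = 0) :
    (1 - δ) * ∑ i, ‖x i‖ ^ 2 ≤ ∑ m, ‖(Paley p *ᵥ x) m‖ ^ 2 ∧
    ∑ m, ‖(Paley p *ᵥ x) m‖ ^ 2 ≤ (1 + δ) * ∑ i, ‖x i‖ ^ 2 :=
  stmt_14_general p hp hp3 k hk3 c δ hc hδ x T hT hsupp
end
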